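/- Assume π is surjective, and let I, I′ ⊆ {1,…,d} be such that the open faces F_I and F_{I′} of Δ are both nonempty. Then Ψ⁻¹(0) ∩ ℂ^d_{F_I} is contained in the closure of Ψ⁻¹(0) ∩ ℂ^d_{F_{I′}} if and only if F_I is contained in the closure of F_{I′}, and both are equivalent to I′ ⊆ I. -/

import Mathlib

open Filter Topology


/-- The open face `F_I = { μ ∈ Δ : ⟨μ,X_j⟩ = λ_j iff j ∈ I }` of
`Δ = ⋂_j { μ : ⟨μ,X_j⟩ ≥ λ_j }`, with `𝔡*` realized as `𝔡 →L[ℝ] ℝ`. -/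
def openFace {𝔡 : Type*} [NormedAddCommGroup 𝔡] [NormedSpace ℝ 𝔡] {d : ℕ}
    (X : Fin d → 𝔡) (lam : Fin d → ℝ) (I : Set (Fin d)) : Set (𝔡 →L[ℝ] ℝ) :=
  {μ | (∀ j, lam j ≤ μ (X j)) ∧ ∀ j, μ (X j) = lam j ↔ j ∈ I}

/-- `Ψ⁻¹(0) ∩ ℂ^d_{F_I}`: the points of the zero level set whose coordinates vanish
exactly on `I`. -/
def zeroLevelStratum {𝔡 : Type*} [AddCommGroup 𝔡] [Module ℝ 𝔡] {d : ℕ}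
    (lam : Fin d → ℝ) (π : (Fin d → ℝ) →ₗ[ℝ] 𝔡) (I : Set (Fin d)) : Set (Fin d → ℂ) :=
  {z | (∀ v ∈ LinearMap.ker π, ∑ j, (‖z j‖ ^ 2 + lam j) * v j = 0) ∧ ∀ j, z j = 0 ↔ j ∈ I}

lemma sum_mu_ker {𝔡 : Type*} [NormedAddCommGroup 𝔡] [NormedSpace ℝ 𝔡] {d : ℕ}
    {X : Fin d → 𝔡} {π : (Fin d → ℝ) →ₗ[ℝ] 𝔡} (hπ : ∀ j, π (Pi.single j 1) = X j)
    (μ : 𝔡 →L[ℝ] ℝ) {v : Fin d → ℝ} (hv : v ∈ LinearMap.ker π) :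
    ∑ j, μ (X j) * v j = 0 := by
  classical
  have hv0 : π v = 0 := hv
  have hvrep : v = ∑ j, v j • (Pi.single j (1:ℝ) : Fin d → ℝ) := by
    ext k
    simp [Finset.sum_apply, Pi.single_apply]
  have h1 : π v = ∑ j, v j • X j := by
    conv_lhs => rw [hvrep]
    rw [map_sum]
    exact Finset.sum_congr rfl fun j _ => by rw [map_smul, hπ j]
  have h2 : (∑ j, v j • X j) = 0 := h1 ▸ hv0
  have h3 := congrArg μ h2
  rw [map_sum, map_zero] at h3
  calc ∑ j, μ (X j) * v j = ∑ j, μ (v j • X j) := by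
        exact Finset.sum_congr rfl fun j _ => by rw [map_smul, smul_eq_mul, mul_comm]
    _ = 0 := h3

lemma face_to_stratum {𝔡 : Type*} [NormedAddCommGroup 𝔡] [NormedSpace ℝ 𝔡] {d : ℕ}
    {X : Fin d → 𝔡} {lam : Fin d → ℝ} {π : (Fin d → ℝ) →ₗ[ℝ] 𝔡}
    (hπ : ∀ j, π (Pi.single j 1) = X j) {J : Set (Fin d)} {μ : 𝔡 →L[ℝ] ℝ}
    (hμ : μ ∈ openFace X lam J) :
    (fun j => ((Real.sqrt (μ (X j) - lam j) : ℝ) : ℂ)) ∈ zeroLevelStratum lam π J := by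
  have hs : ∀ j, ‖((Real.sqrt (μ (X j) - lam j) : ℝ) : ℂ)‖ ^ 2 + lam j = μ (X j) := by
    intro j
    rw [Complex.norm_real, Real.norm_eq_abs, sq_abs,
      Real.sq_sqrt (by linarith [hμ.1 j])]
    ring
  constructor
  · intro v hv
    calc ∑ j, (‖((Real.sqrt (μ (X j) - lam j) : ℝ) : ℂ)‖ ^ 2 + lam j) * v j
        = ∑ j, μ (X j) * v j := Finset.sum_congr rfl fun j _ => by rw [hs j]
      _ = 0 := sum_mu_ker hπ μ hv
  · intro j
    have h1 := hμ.1 j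
    rw [Complex.ofReal_eq_zero, Real.sqrt_eq_zero', ← hμ.2 j]
    constructor
    · intro h; linarith
    · intro h; linarith

/-- Assume `π` is surjective and the open faces `F_I`, `F_{I'}` of `Δ` are
nonempty.  Then `Ψ⁻¹(0) ∩ ℂ^d_{F_I} ⊆ closure (Ψ⁻¹(0) ∩ ℂ^d_{F_{I'}})` iff
`F_I ⊆ closure F_{I'}`, and both are equivalent to `I' ⊆ I`. -/
theorem stratum_closure_order
    {𝔡 : Type*} [NormedAddCommGroup 𝔡] [NormedSpace ℝ 𝔡] [FiniteDimensional ℝ 𝔡]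
    {d : ℕ} (X : Fin d → 𝔡) (lam : Fin d → ℝ)
    (π : (Fin d → ℝ) →ₗ[ℝ] 𝔡) (hπ : ∀ j, π (Pi.single j 1) = X j)
    (hsurj : Function.Surjective π)
    (I I' : Set (Fin d))
    (hne : (openFace X lam I).Nonempty) (hne' : (openFace X lam I').Nonempty) :
    (zeroLevelStratum lam π I ⊆ closure (zeroLevelStratum lam π I') ↔ I' ⊆ I) ∧
    (openFace X lam I ⊆ closure (openFace X lam I') ↔ I' ⊆ I) := by
  classical
  obtain ⟨μ', hμ'⟩ := hne'
  have hNB : (𝓝[Set.Ioo (0:ℝ) 1] (0:ℝ)).NeBot := by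
    rw [nhdsWithin_Ioo_eq_nhdsGT zero_lt_one]; infer_instance
  -- part 2, ⇐
  have faceUp : I' ⊆ I → openFace X lam I ⊆ closure (openFace X lam I') := by
    intro hII μ hμ
    refine mem_closure_of_tendsto (f := fun t : ℝ => μ + t • (μ' - μ))
      (b := 𝓝[Set.Ioo (0:ℝ) 1] 0) ?_ ?_
    · have hc : Continuous fun t : ℝ => μ + t • (μ' - μ) :=
        continuous_const.add (continuous_id.smul continuous_const)
      have := hc.tendsto 0
      simp only [zero_smul, add_zero] at this
      exact this.mono_left nhdsWithin_le_nhds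
    · filter_upwards [self_mem_nhdsWithin] with t ht
      obtain ⟨ht0, ht1⟩ := ht
      refine ⟨fun j => ?_, fun j => ?_⟩
      · have h1 := hμ.1 j
        have h2 := hμ'.1 j
        simp only [ContinuousLinearMap.add_apply, ContinuousLinearMap.smul_apply,
          ContinuousLinearMap.sub_apply, smul_eq_mul]
        nlinarith
      · simp only [ContinuousLinearMap.add_apply, ContinuousLinearMap.smul_apply,
          ContinuousLinearMap.sub_apply, smul_eq_mul]
        constructor
        · intro hj
          by_contra hj'
          have h2 : lam j < μ' (X j) :=
            lt_of_le_of_ne (hμ'.1 j) (fun h => hj' ((hμ'.2 j).mp h.symm))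
          have h1 := hμ.1 j
          nlinarith
        · intro hj
          have hI1 : μ (X j) = lam j := (hμ.2 j).mpr (hII hj)
          have hI2 : μ' (X j) = lam j := (hμ'.2 j).mpr hj
          rw [hI1, hI2]; ring
  -- part 2, ⇒
  have faceDown : openFace X lam I ⊆ closure (openFace X lam I') → I' ⊆ I := by
    intro h j hj
    obtain ⟨μ, hμ⟩ := hne
    have hcl : closure (openFace X lam I') ⊆ {ν : 𝔡 →L[ℝ] ℝ | ν (X j) = lam j} := by
      refine closure_minimal (fun ν hν => (hν.2 j).mpr hj) ?_
      exact isClosed_eq (ContinuousLinearMap.apply ℝ ℝ (X j)).continuous continuous_const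
    exact (hμ.2 j).mp (hcl (h hμ))
  -- part 1, ⇒
  have stratumDown : zeroLevelStratum lam π I ⊆ closure (zeroLevelStratum lam π I') →
      I' ⊆ I := by
    intro h j hj
    obtain ⟨μ, hμ⟩ := hne
    have hz := face_to_stratum hπ hμ
    have hcl : closure (zeroLevelStratum lam π I') ⊆ {w : Fin d → ℂ | w j = 0} := by
      refine closure_minimal (fun w hw => (hw.2 j).mpr hj) ?_
      exact isClosed_eq (continuous_apply j) continuous_const
    have hzj : ((Real.sqrt (μ (X j) - lam j) : ℝ) : ℂ) = 0 := hcl (h hz)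
    exact (hz.2 j).mp hzj
  -- part 1, ⇐
  have stratumUp : I' ⊆ I →
      zeroLevelStratum lam π I ⊆ closure (zeroLevelStratum lam π I') := by
    intro hII z hz
    set u : Fin d → ℂ := fun j => if z j = 0 then 1 else (‖z j‖ : ℂ)⁻¹ * z j with hu
    have hnu : ∀ j, ‖u j‖ = 1 := by
      intro j
      by_cases h : z j = 0
      · simp [hu, h]
      · have hnz : ‖z j‖ ≠ 0 := norm_ne_zero_iff.mpr h
        simp only [hu, h, if_false, norm_mul, norm_inv, Complex.norm_real, Real.norm_eq_abs,
          abs_norm]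
        field_simp
    have hune : ∀ j, u j ≠ 0 := by
      intro j h
      have := hnu j
      rw [h, norm_zero] at this
      norm_num at this
    have hzu : ∀ j, (‖z j‖ : ℂ) * u j = z j := by
      intro j
      by_cases h : z j = 0
      · simp [hu, h]
      · have hnz : (‖z j‖ : ℂ) ≠ 0 := by
          simpa using norm_ne_zero_iff.mpr h
        simp only [hu, h, if_false]
        field_simp
    set A : ℝ → Fin d → ℝ :=
      fun t j => (1 - t) * ‖z j‖ ^ 2 + t * (μ' (X j) - lam j) with hA
    set w : ℝ → Fin d → ℂ :=
      fun t j => ((Real.sqrt (A t j) : ℝ) : ℂ) * u j with hw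
    have hApos : ∀ t ∈ Set.Ioo (0:ℝ) 1, ∀ j, 0 ≤ A t j := by
      intro t ht j
      have h1 := hμ'.1 j
      have h2 : (0:ℝ) ≤ ‖z j‖ ^ 2 := sq_nonneg _
      obtain ⟨ht0, ht1⟩ := ht
      simp only [hA]
      nlinarith
    have hnw : ∀ t ∈ Set.Ioo (0:ℝ) 1, ∀ j, ‖w t j‖ ^ 2 = A t j := by
      intro t ht j
      simp only [hw, norm_mul, Complex.norm_real, Real.norm_eq_abs, hnu j, mul_one,
        sq_abs]
      exact Real.sq_sqrt (hApos t ht j)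
    refine mem_closure_of_tendsto (f := w) (b := 𝓝[Set.Ioo (0:ℝ) 1] 0) ?_ ?_
    · rw [tendsto_pi_nhds]
      intro j
      have hc : Continuous fun t : ℝ => w t j := by
        apply Continuous.mul _ continuous_const
        exact Complex.continuous_ofReal.comp
          (Real.continuous_sqrt.comp (by continuity))
      have := hc.tendsto 0
      have h0 : w 0 j = z j := by
        simp only [hw, hA, one_mul, zero_mul, sub_zero, add_zero,
          Real.sqrt_sq_eq_abs, abs_norm]
        exact hzu j
      rw [h0] at this
      exact this.mono_left nhdsWithin_le_nhds
    · filter_upwards [self_mem_nhdsWithin] with t ht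
      refine ⟨fun v hv => ?_, fun j => ?_⟩
      · have : ∑ j, (‖w t j‖ ^ 2 + lam j) * v j
            = (1 - t) * ∑ j, (‖z j‖ ^ 2 + lam j) * v j + t * ∑ j, μ' (X j) * v j := by
          rw [Finset.mul_sum, Finset.mul_sum, ← Finset.sum_add_distrib]
          refine Finset.sum_congr rfl fun j _ => ?_
          rw [hnw t ht j]
          simp only [hA]
          ring
        rw [this, hz.1 v hv, sum_mu_ker hπ μ' hv]
        ring
      · obtain ⟨ht0, ht1⟩ := ht
        simp only [hw, mul_eq_zero, Complex.ofReal_eq_zero, Real.sqrt_eq_zero']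
        constructor
        · rintro (h | h)
          · by_contra hj'
            have h2 : lam j < μ' (X j) :=
              lt_of_le_of_ne (hμ'.1 j) (fun hh => hj' ((hμ'.2 j).mp hh.symm))
            have h3 : (0:ℝ) ≤ ‖z j‖ ^ 2 := sq_nonneg _
            simp only [hA] at h
            nlinarith
          · exact absurd h (hune j)
        · intro hj
          left
          have hzj : z j = 0 := (hz.2 j).mpr (hII hj)
          have hmj : μ' (X j) = lam j := (hμ'.2 j).mpr hj
          simp [hA, hzj, hmj]
  exact ⟨⟨stratumDown, stratumUp⟩, ⟨faceDown, faceUp⟩⟩
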